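/- Let S be a non-reflexive n-dimensional subspace of L(U,V) between finite-dimensional spaces, with card(K) > n ≥ 2. Then S contains a nonzero operator of rank at most 2n−2. -/

import Mathlib

/-!
Adjoin to `S` an operator `g ∉ S` with `g x ∈ Sx` for all `x`: then `T = S ⊕ K g` has dimension
`n + 1`, while its evaluations `Tx = Sx` have dimension at most `n`. Fix `x₀` with `dim Tx₀`
maximal. Since `K` has more than `n` elements, the rank of the evaluation pencil
`E x₀ + l • E x` cannot drop generically, which forces `t z ∈ Tx₀` whenever `t ∈ T` vanishes at
`x₀`, and `s z ∈ Tx₀` whenever moreover `s x₀ = t z`. Hence a nonzero `s ∈ S` vanishing at `x₀`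
has rank at most `n`. Otherwise evaluation at `x₀` embeds `S` into `Tx₀`, and some nonzero
`h ∈ T` vanishes at `x₀`. If `rank h < n`, the same argument for `S` modulo `range h` gives a
nonzero `s ∈ S` of rank `< n + rank h`. If `rank h = n`, then `range h = Sx₀`, and the operators
`Θ z ∈ S` with `Θ z x₀ = h z` have values `Θ z w` alternating modulo `Sx₀`. If all of them had
rank at least `2n - 1`, then `Θ z z` would be a nonzero multiple of `h z` whenever `h z ≠ 0`,
which fails somewhere on the line `z + K x₀`.
-/

open Module Cardinal

section Pencil

variable {K M N : Type*} [Field K] [AddCommGroup M] [Module K M] [AddCommGroup N] [Module K N]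

theorem Module.End.exists_not_hasEigenvalue [FiniteDimensional K M] (f : Module.End K M)
    (hK : (finrank K M : Cardinal) < #K) : ∃ μ : K, ¬ f.HasEigenvalue μ := by
  classical
  by_contra! h
  have hroots : (Set.univ : Set K) ⊆ f.charpoly.roots.toFinset := fun μ _ => by
    simpa [f.charpoly_monic.ne_zero] using (f.hasEigenvalue_iff_isRoot_charpoly μ).1 (h μ)
  have hcard : #K ≤ finrank K M := by
    calc #K = #(Set.univ : Set K) := mk_univ.symm
      _ ≤ f.charpoly.roots.toFinset.card := (mk_le_mk_of_subset hroots).trans_eq (mk_coe_finset)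
      _ ≤ f.charpoly.natDegree := by
        exact_mod_cast (Multiset.toFinset_card_le _).trans (Polynomial.card_roots' _)
      _ = finrank K M := by rw [LinearMap.charpoly_natDegree]
  exact hcard.not_gt hK

theorem LinearMap.exists_injective_add_smul [FiniteDimensional K M] {A B : M →ₗ[K] N}
    (hK : (finrank K M : Cardinal) < #K) (hA : Function.Injective A)
    (hB : ¬ Function.Injective B) : ∃ l : K, l ≠ 0 ∧ Function.Injective (A + l • B) := by
  -- With `π ∘ₗ A = id`, `A + l • B` is injective unless `-l⁻¹` is an eigenvalue of `π ∘ₗ B`,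
  -- and `0` is one of its at most `finrank K M` eigenvalues.
  obtain ⟨π, hπ⟩ := A.exists_leftInverse_of_injective (LinearMap.ker_eq_bot.2 hA)
  obtain ⟨μ, hμ⟩ := Module.End.exists_not_hasEigenvalue (π ∘ₗ B) hK
  have hμ0 : μ ≠ 0 := by
    rintro rfl
    obtain ⟨m, hm, hm0⟩ : ∃ m, B m = 0 ∧ m ≠ 0 := by
      simpa [injective_iff_map_eq_zero] using hB
    exact hμ (Module.End.hasEigenvalue_of_hasEigenvector
      ⟨Module.End.mem_eigenspace_iff.2 (by simp [hm]), hm0⟩)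
  refine ⟨-μ⁻¹, by simpa using hμ0, (injective_iff_map_eq_zero _).2 fun m hm => ?_⟩
  by_contra hm0
  have hπA : ∀ m, π (A m) = m := fun m => LinearMap.congr_fun hπ m
  have hπm : π (B m) = μ • m := by
    have := congrArg π hm
    simp only [LinearMap.add_apply, LinearMap.smul_apply, map_add, map_smul, hπA,
      map_zero] at this
    rw [neg_smul, add_neg_eq_zero] at this
    calc π (B m) = μ • (μ⁻¹ • π (B m)) := by rw [smul_smul, mul_inv_cancel₀ hμ0, one_smul]
      _ = μ • m := by rw [← this]
  exact hμ (Module.End.hasEigenvalue_of_hasEigenvector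
    ⟨Module.End.mem_eigenspace_iff.2 hπm, hm0⟩)

theorem LinearMap.finrank_range_lt_iff_not_injective [FiniteDimensional K M] (f : M →ₗ[K] N) :
    finrank K (range f) < finrank K M ↔ ¬ Function.Injective f := by
  rw [← ker_eq_bot, ← Submodule.finrank_eq_zero, ← f.finrank_range_add_finrank_ker]
  omega

theorem LinearMap.exists_finrank_range_le_add_smul [FiniteDimensional K M] {A B : M →ₗ[K] N}
    (hK : (finrank K (range A) : Cardinal) < #K)
    (hBA : finrank K (range B) < finrank K (range A)) :
    ∃ l : K, l ≠ 0 ∧ finrank K (range A) ≤ finrank K (range (A + l • B)) := by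
  obtain ⟨ι, hι⟩ := A.rangeRestrict.exists_rightInverse_of_surjective A.range_rangeRestrict
  have hAι : A ∘ₗ ι = (range A).subtype := by
    ext a
    exact congrArg Subtype.val (LinearMap.congr_fun hι a)
  have hBι : ¬ Function.Injective (B ∘ₗ ι) := (B ∘ₗ ι).finrank_range_lt_iff_not_injective.1
    ((Submodule.finrank_mono (LinearMap.range_comp_le_range ι B)).trans_lt hBA)
  obtain ⟨l, hl, hinj⟩ := LinearMap.exists_injective_add_smul (A := A ∘ₗ ι) hK
    (by rw [hAι]; exact Subtype.val_injective) hBι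
  refine ⟨l, hl, ?_⟩
  rw [← LinearMap.smul_comp, ← LinearMap.add_comp] at hinj
  exact (LinearMap.finrank_range_of_inj hinj).symm.trans_le
    (Submodule.finrank_mono (LinearMap.range_comp_le_range ι (A + l • B)))

theorem LinearMap.finrank_range_mkQ_comp_lt [FiniteDimensional K M] (C : M →ₗ[K] N) {w : N}
    (hw : w ∈ range C) (hw0 : w ≠ 0) :
    finrank K (range ((K ∙ w).mkQ ∘ₗ C)) < finrank K (range C) := by
  obtain ⟨m, rfl⟩ := hw
  have hlt : ker C < ker ((K ∙ C m).mkQ ∘ₗ C) := by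
    refine lt_of_le_of_ne (C.ker_le_ker_comp _) fun h => hw0 ?_
    have : m ∈ ker ((K ∙ C m).mkQ ∘ₗ C) := by
      simp [Submodule.mem_span_singleton_self]
    rwa [← h, LinearMap.mem_ker] at this
  have := Submodule.finrank_lt_finrank_of_lt hlt
  have := C.finrank_range_add_finrank_ker
  have := ((K ∙ C m).mkQ ∘ₗ C).finrank_range_add_finrank_ker
  omega

theorem LinearMap.finrank_range_mkQ_comp_eq [FiniteDimensional K M] (A : M →ₗ[K] N) {w : N}
    (hw : w ∉ range A) : finrank K (range ((K ∙ w).mkQ ∘ₗ A)) = finrank K (range A) := by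
  have hker : ker ((K ∙ w).mkQ ∘ₗ A) = ker A := by
    refine le_antisymm (fun m hm => ?_) (A.ker_le_ker_comp _)
    have hdisj := (Submodule.disjoint_span_singleton' (s := range A)
      (ne_of_mem_of_not_mem (range A).zero_mem hw).symm).2 hw
    simp only [LinearMap.mem_ker, LinearMap.comp_apply, Submodule.mkQ_apply,
      Submodule.Quotient.mk_eq_zero] at hm
    exact Submodule.disjoint_def.1 hdisj _ ⟨m, rfl⟩ hm
  have := A.finrank_range_add_finrank_ker
  have := ((K ∙ w).mkQ ∘ₗ A).finrank_range_add_finrank_ker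
  rw [hker] at this
  omega

theorem LinearMap.mem_range_of_forall_mem_range_add_smul [FiniteDimensional K M]
    {A B : M →ₗ[K] N} (hK : (finrank K (range A) : Cardinal) < #K)
    (hB : finrank K (range B) ≤ finrank K (range A))
    (hAB : ∀ l : K, finrank K (range (A + l • B)) ≤ finrank K (range A))
    {w : N} (hwB : w ∈ range B) (hw : ∀ l : K, l ≠ 0 → w ∈ range (A + l • B)) :
    w ∈ range A := by
  -- Modulo `w`, the rank of `A` is kept while those of `B` and of the `A + l • B`, `l ≠ 0`, drop.
  by_contra hwA
  have hw0 : w ≠ 0 := ne_of_mem_of_not_mem (range A).zero_mem hwA |>.symm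
  have hqA := A.finrank_range_mkQ_comp_eq hwA
  obtain ⟨l, hl, hle⟩ := LinearMap.exists_finrank_range_le_add_smul
    (A := (K ∙ w).mkQ ∘ₗ A) (B := (K ∙ w).mkQ ∘ₗ B) (by rwa [hqA])
    (by rw [hqA]; exact (B.finrank_range_mkQ_comp_lt hwB hw0).trans_le hB)
  rw [← LinearMap.comp_smul, ← LinearMap.comp_add, hqA] at hle
  exact (hle.trans_lt ((A + l • B).finrank_range_mkQ_comp_lt (hw l hl) hw0)).not_ge (hAB l)

end Pencil

section MaximalRank

variable {K U M N : Type*} [Field K] [AddCommGroup U] [Module K U] [AddCommGroup M] [Module K M]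
  [AddCommGroup N] [Module K N] [FiniteDimensional K M]

open LinearMap

theorem LinearMap.exists_forall_finrank_range_le {ι : Type*} [Nonempty ι]
    (E : ι → M →ₗ[K] N) : ∃ x₀, ∀ x, finrank K (range (E x)) ≤ finrank K (range (E x₀)) := by
  obtain ⟨_, ⟨x₀, rfl⟩, hx₀⟩ := BddAbove.exists_isGreatest_of_nonempty
    ⟨finrank K M, by rintro _ ⟨x, rfl⟩; exact (E x).finrank_range_le⟩
    (Set.range_nonempty fun x => finrank K (range (E x)))
  exact ⟨x₀, fun x => hx₀ ⟨x, rfl⟩⟩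

theorem LinearMap.apply_mem_range_of_forall_finrank_range_le (E : U →ₗ[K] M →ₗ[K] N) {x₀ : U}
    (hmax : ∀ x, finrank K (range (E x)) ≤ finrank K (range (E x₀)))
    (hK : (finrank K (range (E x₀)) : Cardinal) < #K) (x : U) {m₀ m : M}
    (hm₀ : E x₀ m₀ = 0) (hm : E x₀ m = E x m₀) : E x m ∈ range (E x₀) := by
  have hpencil : ∀ l : K, E x₀ + l • E x = E (x₀ + l • x) := fun l => by
    rw [map_add, map_smul]
  refine mem_range_of_forall_mem_range_add_smul hK (hmax x)
    (fun l => hpencil l ▸ hmax _) ⟨m, rfl⟩ fun l hl => ⟨l⁻¹ • m - (l⁻¹ * l⁻¹) • m₀, ?_⟩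
  simp only [add_apply, smul_apply, map_sub, map_smul, hm₀, hm]
  match_scalars <;> simp [hl]

theorem LinearMap.apply_mem_range_of_apply_eq_zero (E : U →ₗ[K] M →ₗ[K] N) {x₀ : U}
    (hmax : ∀ x, finrank K (range (E x)) ≤ finrank K (range (E x₀)))
    (hK : (finrank K (range (E x₀)) : Cardinal) < #K) (x : U) {m : M} (hm : E x₀ m = 0) :
    E x m ∈ range (E x₀) :=
  E.apply_mem_range_of_forall_finrank_range_le hmax hK x (map_zero _) (by rw [hm, map_zero])

end MaximalRank

section OperatorSpaces

variable {K U V : Type*} [Field K] [AddCommGroup U] [Module K U] [AddCommGroup V] [Module K V]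

open LinearMap

theorem LinearMap.finrank_range_le_finrank_range_mkQ_comp_add [FiniteDimensional K V]
    (f : U →ₗ[K] V) (W : Submodule K V) :
    finrank K (range f) ≤ finrank K (range (W.mkQ ∘ₗ f)) + finrank K W := by
  have hrank := (W.mkQ ∘ₗ (range f).subtype).finrank_range_add_finrank_ker
  rw [range_comp, Submodule.range_subtype, ← range_comp] at hrank
  have hker : finrank K (ker (W.mkQ ∘ₗ (range f).subtype)) ≤ finrank K W := by
    rw [ker_comp, Submodule.ker_mkQ, ← Submodule.finrank_map_subtype_eq,
      Submodule.map_comap_subtype]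
    exact Submodule.finrank_mono inf_le_right
  omega

/-- The range of `S.eval x` is the space `Sx` of the paper. -/
def Submodule.eval (S : Submodule K (U →ₗ[K] V)) : U →ₗ[K] S →ₗ[K] V :=
  LinearMap.applyₗ.compl₂ S.subtype

@[simp]
theorem Submodule.eval_apply (S : Submodule K (U →ₗ[K] V)) (x : U) (s : S) :
    S.eval x s = (s : U →ₗ[K] V) x :=
  rfl

/-- `f` lies in the reflexive closure of `S`. -/
def IsLocallyIn (f : U →ₗ[K] V) (S : Submodule K (U →ₗ[K] V)) : Prop :=
  ∀ x, ∃ s ∈ S, s x = f x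

theorem IsLocallyIn.of_mem_sup_span_singleton {S : Submodule K (U →ₗ[K] V)} {g t : U →ₗ[K] V}
    (hg : IsLocallyIn g S) (ht : t ∈ S ⊔ K ∙ g) : IsLocallyIn t S := by
  obtain ⟨s, hs, _, hc, rfl⟩ := Submodule.mem_sup.1 ht
  obtain ⟨c, rfl⟩ := Submodule.mem_span_singleton.1 hc
  intro x
  obtain ⟨s', hs', hs'x⟩ := hg x
  exact ⟨s + c • s', S.add_mem hs (S.smul_mem c hs'), by simp [hs'x]⟩

theorem IsLocallyIn.range_eval_sup_span_singleton {S : Submodule K (U →ₗ[K] V)}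
    {g : U →ₗ[K] V} (hg : IsLocallyIn g S) (x : U) :
    range ((S ⊔ K ∙ g).eval x) = range (S.eval x) := by
  refine le_antisymm ?_ ?_
  · rintro _ ⟨t, rfl⟩
    obtain ⟨s, hs, hsx⟩ := hg.of_mem_sup_span_singleton t.2 x
    exact ⟨⟨s, hs⟩, hsx⟩
  · rintro _ ⟨s, rfl⟩
    exact ⟨⟨s, le_sup_left (a := S) s.2⟩, rfl⟩

theorem LinearMap.apply_add_apply_mem_of_forall_apply_self_mem (Θ : U →ₗ[K] U →ₗ[K] V)
    {P : Submodule K V} (hdiag : ∀ z, Θ z z ∈ P) (z w : U) : Θ z w + Θ w z ∈ P := by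
  have h := P.sub_mem (P.sub_mem (hdiag (z + w)) (hdiag z)) (hdiag w)
  simp only [map_add, add_apply] at h
  convert h using 1
  abel

variable [FiniteDimensional K U] [FiniteDimensional K V]

theorem IsLocallyIn.not_injective_mkQ_comp_eval {S : Submodule K (U →ₗ[K] V)}
    {f : U →ₗ[K] V} (hf : IsLocallyIn f S) (hf0 : f ≠ 0) (hK : (finrank K S : Cardinal) < #K)
    (x : U) : ¬ Function.Injective ((range f).mkQ ∘ₗ S.eval x) := by
  have hne : ∀ x, f x ≠ 0 → ¬ Function.Injective ((range f).mkQ ∘ₗ S.eval x) := by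
    intro x hx hinj
    obtain ⟨s, hs, hsx⟩ := hf x
    have hs0 : (⟨s, hs⟩ : S) = 0 := (injective_iff_map_eq_zero _).1 hinj _ <| by
      rw [comp_apply, Submodule.eval_apply, hsx, Submodule.mkQ_apply,
        Submodule.Quotient.mk_eq_zero]
      exact mem_range_self f x
    exact hx (by rw [← hsx, show s = 0 from congrArg Subtype.val hs0, LinearMap.zero_apply])
  intro hinj
  by_cases hx : f x = 0
  · obtain ⟨y, hy⟩ : ∃ y, f y ≠ 0 := by
      by_contra! h
      exact hf0 (LinearMap.ext h)
    obtain ⟨l, hl, hinj'⟩ := exists_injective_add_smul hK hinj (hne y hy)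
    refine hne (x + l • y) (by simp [hx, hl, hy]) ?_
    rwa [map_add, map_smul, comp_add, comp_smul]
  · exact hne x hx hinj

/-- An element of `S` vanishing modulo `range f` at a point of maximal rank of `S` modulo
`range f` takes its values there, in a space of dimension `< finrank K S`. -/
theorem IsLocallyIn.exists_ne_zero_finrank_range_lt {S : Submodule K (U →ₗ[K] V)}
    {f : U →ₗ[K] V} (hf : IsLocallyIn f S) (hf0 : f ≠ 0) (hK : (finrank K S : Cardinal) < #K) :
    ∃ s ∈ S, s ≠ 0 ∧ finrank K (range s) < finrank K S + finrank K (range f) := by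
  set q := (range f).mkQ
  let E : U →ₗ[K] S →ₗ[K] V ⧸ range f := S.eval.compr₂ q
  obtain ⟨x₀, hmax⟩ := exists_forall_finrank_range_le E
  have hsing : ¬ Function.Injective (E x₀) := hf.not_injective_mkQ_comp_eval hf0 hK x₀
  have hlt : finrank K (range (E x₀)) < finrank K S :=
    (E x₀).finrank_range_lt_iff_not_injective.2 hsing
  obtain ⟨s, hsx₀, hs0⟩ : ∃ s, E x₀ s = 0 ∧ s ≠ 0 := by
    simpa [injective_iff_map_eq_zero] using hsing
  have hrange : range (q ∘ₗ (s : U →ₗ[K] V)) ≤ range (E x₀) := by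
    rintro _ ⟨z, rfl⟩
    exact E.apply_mem_range_of_apply_eq_zero hmax ((Nat.cast_lt.2 hlt).trans hK) z hsx₀
  refine ⟨s, s.2, fun h => hs0 (Subtype.ext h), ?_⟩
  calc finrank K (range (s : U →ₗ[K] V))
      ≤ finrank K (range (q ∘ₗ (s : U →ₗ[K] V))) + finrank K (range f) :=
        finrank_range_le_finrank_range_mkQ_comp_add _ _
    _ ≤ finrank K (range (E x₀)) + finrank K (range f) := by
        gcongr
        exact Submodule.finrank_mono hrange
    _ < finrank K S + finrank K (range f) := by omega

section Diagonal

variable {Θ : U →ₗ[K] U →ₗ[K] V} {h : U →ₗ[K] V}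

theorem LinearMap.comap_le_ker_sup_span_singleton (hker : ∀ w, h w = 0 → Θ w = 0)
    (hdiag : ∀ z, Θ z z ∈ range h) {z : U} (hz : h z ≠ 0)
    (hrank : 2 * finrank K (range h) - 2 < finrank K (range (Θ z))) :
    (range h).comap (Θ z) ≤ ker h ⊔ K ∙ z := by
  have hle : ker h ⊔ K ∙ z ≤ (range h).comap (Θ z) := by
    refine sup_le (fun w hw => ?_) ((Submodule.span_singleton_le_iff_mem _ _).2 (hdiag z))
    simpa [hker w hw] using Θ.apply_add_apply_mem_of_forall_apply_self_mem hdiag z w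
  have hsup := Submodule.finrank_sup_span_singleton (p := ker h) (v := z) hz
  have hquot := (Θ z).finrank_range_le_finrank_range_mkQ_comp_add (range h)
  have hL := ((range h).mkQ ∘ₗ Θ z).finrank_range_add_finrank_ker
  rw [ker_comp, Submodule.ker_mkQ] at hL
  have := h.finrank_range_add_finrank_ker
  exact (Submodule.eq_of_le_of_finrank_le hle (by omega)).ge

theorem LinearMap.exists_smul_apply_self_eq (hker : ∀ w, h w = 0 → Θ w = 0)
    (hdiag : ∀ z, Θ z z ∈ range h) (hloc : ∀ z, ∃ y, Θ y z = h z) {z : U} (hz : h z ≠ 0)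
    (hrank : 2 * finrank K (range h) - 2 < finrank K (range (Θ z))) :
    ∃ γ : K, γ • Θ z z = h z := by
  obtain ⟨y, hy⟩ := hloc z
  have hyz : Θ z y ∈ range h := by
    have := Θ.apply_add_apply_mem_of_forall_apply_self_mem hdiag y z
    rwa [hy, Submodule.add_mem_iff_right _ (mem_range_self h z)] at this
  obtain ⟨k, hk, _, hc, rfl⟩ :=
    Submodule.mem_sup.1 (comap_le_ker_sup_span_singleton hker hdiag hz hrank hyz)
  obtain ⟨γ, rfl⟩ := Submodule.mem_span_singleton.1 hc
  refine ⟨γ, ?_⟩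
  rw [← hy, map_add, hker k hk, map_smul]
  simp

/-- Since `Θ x₀ = 0`, the diagonal satisfies `Θ (z + t • x₀) (z + t • x₀) = Θ z z + t • h z`.
Under the negated conclusion it is a nonzero multiple of `h z` by `exists_smul_apply_self_eq`,
so it vanishes at some point of the line `z + K x₀`, where that lemma applies again. -/
theorem LinearMap.exists_finrank_range_apply_le {x₀ : U} (hΘ : ∀ z, Θ z x₀ = h z)
    (hx₀ : h x₀ = 0) (hh : h ≠ 0) (hker : ∀ w, h w = 0 → Θ w = 0)
    (hdiag : ∀ z, Θ z z ∈ range h) (hloc : ∀ z, ∃ y, Θ y z = h z) :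
    ∃ z, h z ≠ 0 ∧ finrank K (range (Θ z)) ≤ 2 * finrank K (range h) - 2 := by
  by_contra! hrank
  obtain ⟨z, hz⟩ : ∃ z, h z ≠ 0 := by
    by_contra! H
    exact hh (LinearMap.ext H)
  obtain ⟨γ, hγ⟩ := exists_smul_apply_self_eq hker hdiag hloc hz (hrank z hz)
  have hγ0 : γ ≠ 0 := by
    rintro rfl
    exact hz (by rw [← hγ, zero_smul])
  set z' := z - γ⁻¹ • x₀
  have hz' : h z' = h z := by simp [z', hx₀]
  have hdiag' : Θ z' z' = 0 := by
    simp only [z', map_sub, map_smul, hker x₀ hx₀, hΘ, smul_zero, sub_zero, ← hγ, smul_smul,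
      inv_mul_cancel₀ hγ0, one_smul, sub_self]
  obtain ⟨γ', hγ'⟩ := exists_smul_apply_self_eq hker hdiag hloc (hz' ▸ hz) (hrank z' (hz' ▸ hz))
  rw [hdiag', smul_zero, hz'] at hγ'
  exact hz hγ'.symm

end Diagonal

theorem Submodule.exists_ne_zero_finrank_range_le_of_injective_eval
    {S : Submodule K (U →ₗ[K] V)} {h : U →ₗ[K] V} {x₀ : U}
    (hinj : Function.Injective (S.eval x₀)) (hrange : range h = range (S.eval x₀))
    (hquad : ∀ s ∈ S, ∀ z, s x₀ = h z → s z ∈ range h) (hloc : IsLocallyIn h S) (hh : h ≠ 0)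
    (hx₀ : h x₀ = 0) : ∃ s ∈ S, s ≠ 0 ∧ finrank K (range s) ≤ 2 * finrank K (range h) - 2 := by
  obtain ⟨π, hπ⟩ := (S.eval x₀).exists_leftInverse_of_injective (ker_eq_bot.2 hinj)
  have hπe : ∀ s, π (S.eval x₀ s) = s := fun s => LinearMap.congr_fun hπ s
  let Θ : U →ₗ[K] U →ₗ[K] V := S.subtype ∘ₗ π ∘ₗ h
  have hΘS : ∀ z, Θ z ∈ S := fun z => (π (h z)).2
  have hΘ : ∀ z, Θ z x₀ = h z := fun z => by
    obtain ⟨s, hs⟩ : h z ∈ range (S.eval x₀) := hrange ▸ mem_range_self h z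
    change ((π (h z) : S) : U →ₗ[K] V) x₀ = h z
    rw [← hs, hπe]
    rfl
  have hΘloc : ∀ z, ∃ y, Θ y z = h z := fun z => by
    obtain ⟨s, hs, hsz⟩ := hloc z
    obtain ⟨y, hy⟩ : s x₀ ∈ range h := hrange ▸ ⟨⟨s, hs⟩, rfl⟩
    refine ⟨y, ?_⟩
    have : Θ y = s := by
      simp only [Θ, comp_apply, Submodule.subtype_apply, hy]
      exact congrArg Subtype.val (hπe ⟨s, hs⟩)
    rw [this, hsz]
  obtain ⟨z, hz, hzr⟩ := exists_finrank_range_apply_le hΘ hx₀ hh (fun w hw => by simp [Θ, hw])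
    (fun z => hquad _ (hΘS z) z (hΘ z)) hΘloc
  exact ⟨Θ z, hΘS z, fun h0 => hz (by rw [← hΘ, h0, LinearMap.zero_apply]), hzr⟩

theorem IsLocallyIn.exists_ne_zero_finrank_range_le {n : ℕ} (hn : 2 ≤ n)
    (hK : (n : Cardinal) < #K) {S : Submodule K (U →ₗ[K] V)} (hdim : finrank K S = n)
    {g : U →ₗ[K] V} (hgS : g ∉ S) (hg : IsLocallyIn g S) :
    ∃ f ∈ S, f ≠ 0 ∧ finrank K (range f) ≤ 2 * n - 2 := by
  set T := S ⊔ K ∙ g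
  have hST : S ≤ T := le_sup_left
  obtain ⟨x₀, hmax⟩ := exists_forall_finrank_range_le T.eval
  set P := range (T.eval x₀)
  have hPS : P = range (S.eval x₀) := hg.range_eval_sup_span_singleton x₀
  have hPn : finrank K P ≤ n := hPS ▸ hdim ▸ (S.eval x₀).finrank_range_le
  have hKP : (finrank K P : Cardinal) < #K := (Nat.cast_le.2 hPn).trans_lt hK
  have hvanish : ∀ t (ht : t ∈ T), t x₀ = 0 → range t ≤ P := by
    rintro t ht ht0 _ ⟨z, rfl⟩
    exact T.eval.apply_mem_range_of_apply_eq_zero hmax hKP z (m := ⟨t, ht⟩) ht0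
  obtain hninj | hinj := em' (Function.Injective (S.eval x₀))
  · obtain ⟨s, hs, hs0, hsne⟩ : ∃ s ∈ S, s x₀ = 0 ∧ s ≠ 0 := by
      simpa [injective_iff_map_eq_zero] using hninj
    have := Submodule.finrank_mono (hvanish s (hST hs) hs0)
    exact ⟨s, hs, hsne, by omega⟩
  obtain ⟨h, hhT, hx₀, hh⟩ : ∃ h ∈ T, h x₀ = 0 ∧ h ≠ 0 := by
    have hTdim : finrank K T = n + 1 := by rw [Submodule.finrank_sup_span_singleton hgS, hdim]
    have hsing := (T.eval x₀).finrank_range_lt_iff_not_injective.1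
      (show finrank K P < finrank K T by omega)
    simpa [injective_iff_map_eq_zero] using hsing
  have hhloc : IsLocallyIn h S := hg.of_mem_sup_span_singleton hhT
  by_cases hrk : finrank K (range h) < n
  · obtain ⟨s, hs, hs0, hsr⟩ := hhloc.exists_ne_zero_finrank_range_lt hh (hdim ▸ hK)
    exact ⟨s, hs, hs0, by omega⟩
  have hhP : range h = P := Submodule.eq_of_le_of_finrank_le (hvanish h hhT hx₀) (by omega)
  obtain ⟨s, hs, hs0, hsr⟩ := Submodule.exists_ne_zero_finrank_range_le_of_injective_eval hinj
    (hhP.trans hPS) (fun s hs z hsz => hhP ▸ T.eval.apply_mem_range_of_forall_finrank_range_le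
      hmax hKP z (m₀ := ⟨h, hhT⟩) (m := ⟨s, hST hs⟩) hx₀ hsz) hhloc hh hx₀
  rw [hhP] at hsr
  exact ⟨s, hs, hs0, by omega⟩

end OperatorSpaces

theorem stmt15 {K U V : Type*} [Field K] [AddCommGroup U] [Module K U]
    [AddCommGroup V] [Module K V] [FiniteDimensional K U] [FiniteDimensional K V]
    {n : ℕ} (hn : 2 ≤ n) (hK : (n : Cardinal) < Cardinal.mk K)
    (S : Submodule K (U →ₗ[K] V)) (hdim : Module.finrank K S = n)
    (hnonrefl : ∃ g : U →ₗ[K] V, g ∉ S ∧ ∀ x : U, ∃ f ∈ S, f x = g x) :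
    ∃ f ∈ S, f ≠ 0 ∧ LinearMap.rank f ≤ ((2 * n - 2 : ℕ) : Cardinal) := by
  obtain ⟨g, hgS, hg⟩ := hnonrefl
  obtain ⟨f, hf, hf0, hrank⟩ := IsLocallyIn.exists_ne_zero_finrank_range_le hn hK hdim hgS hg
  refine ⟨f, hf, hf0, ?_⟩
  rw [LinearMap.rank, ← finrank_eq_rank]
  exact_mod_cast hrank
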